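/- Let Φ be a finite crystallographic root system spanning a real vector space V, with simple roots α₁, …, α_n, coroots α̌₁, …, α̌_n, Weyl group W generated by the simple reflections s₁, …, s_n, and length function ℓ. Fix an index i and let λ ∈ V satisfy ⟨λ, α̌_i⟩ ≥ 0 and ⟨λ, α̌_j⟩ = −1 for every j ≠ i, and let λ_{a.d.} be an anti-dominant element of the orbit W·λ (i.e., ⟨λ_{a.d.}, α̌_j⟩ ≤ 0 for all j). Then the number of elements w of the set W^{J} = {w ∈ W : ℓ(w s_j) > ℓ(w) for all j ≠ i} of minimal-length coset representatives of W/W_J (where W_J is the parabolic subgroup generated by {s_j : j ≠ i}) satisfying w·λ = λ_{a.d.} is equal to the order of the stabilizer Stab_W(λ_{a.d.}) = {u ∈ W : u·λ_{a.d.} = λ_{a.d.}}. -/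

import Mathlib

/-!
The Weyl group permutes roots and coroots compatibly with the pairing. So if `w λ = λₐ.d.`
and `j ≠ i`, the root `w αⱼ` cannot be negative: its coroot would be a positive multiple of a
nonpositive combination of simple coroots, on which the anti-dominant `λₐ.d.` pairs to something
`≥ 0`, not `-1`. Since `w αⱼ > 0` forces `ℓ(w sⱼ) > ℓ(w)` (a deletion argument on reduced
words), every `w` with `w λ = λₐ.d.` is a minimal coset representative, and these `w` form a
coset of `Stab_W(λₐ.d.)`.
-/

/-- The length of a group element `w` with respect to a generating set `S`: the least `k`
such that `w` is a product of `k` elements of `S`. -/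
noncomputable def wordLength {G : Type*} [Group G] (S : Set G) (w : G) : ℕ :=
  sInf {k | ∃ l : List G, l.length = k ∧ (∀ x ∈ l, x ∈ S) ∧ l.prod = w}

/-- A root system: a root pairing whose roots and coroots span their ambient modules
(the `RootSystem` structure of the older Mathlib, now `RootPairing` with `IsRootSystem`). -/
structure RootSystem (ι R M N : Type*) [CommRing R] [AddCommGroup M] [Module R M]
    [AddCommGroup N] [Module R N] extends RootPairing ι R M N where
  span_root_eq_top : Submodule.span R (Set.range toRootPairing.root) = ⊤
  span_coroot_eq_top : Submodule.span R (Set.range toRootPairing.coroot) = ⊤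

open Set

section WordLength

variable {G : Type*} [Group G] {S : Set G}

lemma Subgroup.exists_list_prod_eq_of_forall_inv_mem (hS : ∀ s ∈ S, s⁻¹ ∈ S) {w : G}
    (hw : w ∈ Subgroup.closure S) : ∃ l : List G, (∀ x ∈ l, x ∈ S) ∧ l.prod = w := by
  have hinv : S⁻¹ ⊆ S := fun s hs => by simpa using hS _ hs
  rw [← Subgroup.mem_toSubmonoid, Subgroup.closure_toSubmonoid, union_eq_left.2 hinv] at hw
  exact Submonoid.exists_list_of_mem_closure hw

lemma wordLength_list_prod_le {l : List G} (hl : ∀ x ∈ l, x ∈ S) :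
    wordLength S l.prod ≤ l.length :=
  Nat.sInf_le ⟨l, rfl, hl, rfl⟩

lemma exists_list_length_eq_wordLength (hS : ∀ s ∈ S, s⁻¹ ∈ S) {w : G}
    (hw : w ∈ Subgroup.closure S) :
    ∃ l : List G, (∀ x ∈ l, x ∈ S) ∧ l.prod = w ∧ l.length = wordLength S w := by
  obtain ⟨l, hl, rfl⟩ := Subgroup.exists_list_prod_eq_of_forall_inv_mem hS hw
  have hmem : wordLength S l.prod ∈
      {k | ∃ l' : List G, l'.length = k ∧ (∀ x ∈ l', x ∈ S) ∧ l'.prod = l.prod} :=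
    Nat.sInf_mem ⟨l.length, l, rfl, hl, rfl⟩
  obtain ⟨l', hlen, hl', hprod⟩ := hmem
  exact ⟨l', hl', hprod, hlen⟩

end WordLength

lemma Subgroup.card_mem_and_smul_eq_eq_card_mem_and_smul_self {G α : Type*} [Group G]
    [MulAction G α] {H : Subgroup G} {u₀ : G} (hu₀ : u₀ ∈ H) (x : α) :
    Nat.card {w : G | w ∈ H ∧ w • x = u₀ • x} =
      Nat.card {u : G | u ∈ H ∧ u • u₀ • x = u₀ • x} :=
  Nat.card_congr ((Equiv.mulRight u₀).subtypeEquiv fun u => by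
    simp [mul_smul, H.mul_mem_cancel_right hu₀]).symm

section Cone

variable (R : Type*) {κ M : Type*} [Fintype κ] [Ring R] [PartialOrder R] [AddCommGroup M]
  [Module R M]

def IsNonnegComb (b : κ → M) (v : M) : Prop :=
  ∃ c : κ → R, (∀ j, 0 ≤ c j) ∧ v = ∑ j, c j • b j

def IsNonposComb (b : κ → M) (v : M) : Prop :=
  ∃ c : κ → R, (∀ j, c j ≤ 0) ∧ v = ∑ j, c j • b j

variable {R} {b : κ → M} {v : M}

lemma IsNonnegComb.neg [IsOrderedRing R] (h : IsNonnegComb R b v) : IsNonposComb R b (-v) := by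
  obtain ⟨c, hc, rfl⟩ := h
  exact ⟨-c, fun j => neg_nonpos.2 (hc j), by simp [Finset.sum_neg_distrib]⟩

lemma isNonnegComb_self [IsOrderedRing R] [DecidableEq κ] (j : κ) : IsNonnegComb R b (b j) :=
  ⟨Pi.single j 1, fun k => by by_cases h : k = j <;> simp [h], by simp [Pi.single_apply]⟩

lemma LinearIndependent.eq_zero_of_isNonnegComb_of_isNonposComb (hb : LinearIndependent R b)
    (hpos : IsNonnegComb R b v) (hneg : IsNonposComb R b v) : v = 0 := by
  obtain ⟨c, hc, rfl⟩ := hpos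
  obtain ⟨d, hd, hcd⟩ := hneg
  have hcd := Fintype.linearIndependent_iffₛ.1 hb c d hcd
  exact Finset.sum_eq_zero fun j _ => by
    rw [le_antisymm (hcd j ▸ hd j) (hc j), zero_smul]

lemma LinearIndependent.exists_eq_smul_of_isNonnegComb_of_isNonposComb_sub
    (hb : LinearIndependent R b) {m : κ} {t : R} (hpos : IsNonnegComb R b v)
    (hneg : IsNonposComb R b (v - t • b m)) : ∃ c : R, v = c • b m := by
  classical
  obtain ⟨c, hc, rfl⟩ := hpos
  obtain ⟨d, hd, hcd⟩ := hneg
  have hcoeff := Fintype.linearIndependent_iffₛ.1 hb c (d + Pi.single m t) <| by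
    simp [add_smul, Finset.sum_add_distrib, ← hcd, Pi.single_apply]
  refine ⟨c m, Finset.sum_eq_single m (fun j _ hj => ?_) (by simp)⟩
  have hcj : c j = d j := by simpa [hj] using hcoeff j
  rw [le_antisymm (hcj ▸ hd j) (hc j), zero_smul]

end Cone

namespace RootPairing

variable {ι R M N : Type*} [CommRing R] [AddCommGroup M] [Module R M] [AddCommGroup N]
  [Module R N] (P : RootPairing ι R M N)

lemma exists_perm_of_mem_closure_range_reflection {w : M ≃ₗ[R] M}
    (hw : w ∈ Subgroup.closure (range P.reflection)) :
    ∃ σ : Equiv.Perm ι, ∀ k, w (P.root k) = P.root (σ k) ∧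
      ∀ x, P.coroot' (σ k) (w x) = P.coroot' k x := by
  have reflection_mem (m : ι) :
      ∃ σ : Equiv.Perm ι, ∀ k, P.reflection m (P.root k) = P.root (σ k) ∧
        ∀ x, P.coroot' (σ k) (P.reflection m x) = P.coroot' k x :=
    ⟨P.reflectionPerm m, fun k =>
      ⟨(P.root_reflectionPerm m k).symm, fun x => by rw [coroot'_reflection, reflectionPerm_self]⟩⟩
  induction hw using Subgroup.closure_induction'' with
  | mem _ h => obtain ⟨m, rfl⟩ := h; exact reflection_mem m
  | inv_mem _ h => obtain ⟨m, rfl⟩ := h; rw [reflection_inv]; exact reflection_mem m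
  | one => exact ⟨1, fun k => ⟨rfl, fun x => rfl⟩⟩
  | mul w₁ w₂ _ _ ih₁ ih₂ =>
    obtain ⟨σ₁, h₁⟩ := ih₁
    obtain ⟨σ₂, h₂⟩ := ih₂
    refine ⟨σ₁ * σ₂, fun k => ⟨?_, fun x => ?_⟩⟩
    · simp [(h₂ k).1, (h₁ (σ₂ k)).1]
    · simp [(h₁ (σ₂ k)).2, (h₂ k).2]

lemma mul_reflection_eq_reflection_mul {w : M ≃ₗ[R] M} {k k' : ι}
    (hroot : w (P.root k) = P.root k') (hcoroot : ∀ x, P.coroot' k' (w x) = P.coroot' k x) :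
    w * P.reflection k = P.reflection k' * w := by
  ext x
  simp [reflection_apply, hroot, hcoroot]

lemma reflection_eq_of_root_eq_smul [Finite ι] [IsAddTorsionFree N] {k m : ι} {c : R}
    (h : P.root k = c • P.root m) : P.reflection k = P.reflection m := by
  have hcoroot := smul_coroot_eq_of_root_eq_smul m k c h
  ext x
  simp [reflection_apply, h, ← hcoroot, smul_smul, mul_comm]

lemma rootForm_self_smul_coroot_eq_sum [Fintype ι] {κ : Type*} [Fintype κ] {b : κ → ι}
    {d : κ → R} {k : ι} (h : P.root k = ∑ j, d j • P.root (b j)) :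
    P.RootForm (P.root k) (P.root k) • P.coroot k =
      ∑ j, (d j * P.RootForm (P.root (b j)) (P.root (b j))) • P.coroot (b j) := by
  calc P.RootForm (P.root k) (P.root k) • P.coroot k
      = 2 • P.Polarization (∑ j, d j • P.root (b j)) := by rw [rootForm_self_smul_coroot, h]
    _ = ∑ j, d j • (2 • P.Polarization (P.root (b j))) := by
      simp only [map_sum, map_smul, Finset.smul_sum]
      exact Finset.sum_congr rfl fun j _ => smul_comm _ _ _
    _ = _ := by simp_rw [← rootForm_self_smul_coroot, smul_smul]

section LinearOrder

variable [LinearOrder R] [IsStrictOrderedRing R] {n : ℕ} {β : Fin n → ι}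

lemma rootForm_root_self_pos [Fintype ι] (k : ι) :
    0 < P.RootForm (P.root k) (P.root k) := by
  rw [rootForm_root_self]
  calc (0 : R) < P.pairing k k * P.pairing k k := by norm_num [pairing_same]
    _ ≤ ∑ i, P.pairing k i * P.pairing k i :=
      Finset.single_le_sum (fun i _ => mul_self_nonneg _) (Finset.mem_univ k)

variable {P}

lemma exists_list_prod_eq_mul_reflection_of_isNonposComb [Finite ι] [IsAddTorsionFree N]
    (hind : LinearIndependent R fun j => P.root (β j))
    (hbase : ∀ k, IsNonnegComb R (fun j => P.root (β j)) (P.root k) ∨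
      IsNonposComb R (fun j => P.root (β j)) (P.root k))
    (j : Fin n) {l : List (M ≃ₗ[R] M)} (hl : ∀ x ∈ l, x ∈ range fun j => P.reflection (β j))
    (hneg : IsNonposComb R (fun j => P.root (β j)) (l.prod (P.root (β j)))) :
    ∃ l' : List (M ≃ₗ[R] M), (∀ x ∈ l', x ∈ range fun j => P.reflection (β j)) ∧
      l'.prod = l.prod * P.reflection (β j) ∧ l'.length + 1 = l.length := by
  classical
  induction l with
  | nil =>
    exact absurd (hind.eq_zero_of_isNonnegComb_of_isNonposComb (isNonnegComb_self j)
      (by simpa using hneg)) (P.ne_zero _)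
  | cons s t ih =>
    obtain ⟨⟨m, rfl⟩, ht⟩ := List.forall_mem_cons.1 hl
    have htW : t.prod ∈ Subgroup.closure (range P.reflection) :=
      Subgroup.list_prod_mem _ fun x hx =>
        Subgroup.subset_closure (range_comp_subset_range β P.reflection (ht x hx))
    obtain ⟨σ, hσ⟩ := P.exists_perm_of_mem_closure_range_reflection htW
    obtain ⟨hroot, hcoroot⟩ := hσ (β j)
    rw [List.prod_cons, LinearEquiv.mul_apply, hroot, reflection_apply] at hneg
    rcases hbase (σ (β j)) with hpos | hneg'
    · -- `s_m` makes the positive root `t αⱼ` negative, so `t αⱼ` is a multiple of `α_m` and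
      -- `t sⱼ = s_m t`: the leading letter cancels.
      obtain ⟨c, hc⟩ := hind.exists_eq_smul_of_isNonnegComb_of_isNonposComb_sub hpos hneg
      have hcomm : t.prod * P.reflection (β j) = P.reflection (β m) * t.prod := by
        rw [P.mul_reflection_eq_reflection_mul hroot hcoroot, P.reflection_eq_of_root_eq_smul hc]
      refine ⟨t, ht, ?_, rfl⟩
      rw [List.prod_cons, mul_assoc, hcomm, ← mul_assoc, ← sq, reflection_sq, one_mul]
    · obtain ⟨l', hl', hprod, hlen⟩ := ih ht (by rwa [hroot])
      exact ⟨P.reflection (β m) :: l', List.forall_mem_cons.2 ⟨⟨m, rfl⟩, hl'⟩,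
        by rw [List.prod_cons, List.prod_cons, hprod, mul_assoc], by simp [hlen]⟩

lemma wordLength_lt_wordLength_mul_reflection [Finite ι] [IsAddTorsionFree N]
    (hind : LinearIndependent R fun j => P.root (β j))
    (hbase : ∀ k, IsNonnegComb R (fun j => P.root (β j)) (P.root k) ∨
      IsNonposComb R (fun j => P.root (β j)) (P.root k))
    {w : M ≃ₗ[R] M} (hw : w ∈ Subgroup.closure (range fun j => P.reflection (β j))) {j : Fin n}
    (hpos : IsNonnegComb R (fun j => P.root (β j)) (w (P.root (β j)))) :
    wordLength (range fun j => P.reflection (β j)) w <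
      wordLength (range fun j => P.reflection (β j)) (w * P.reflection (β j)) := by
  have hinv : ∀ s ∈ range fun j => P.reflection (β j), s⁻¹ ∈ range fun j => P.reflection (β j) := by
    rintro _ ⟨m, rfl⟩
    exact ⟨m, (P.reflection_inv _).symm⟩
  have hsj : P.reflection (β j) ∈ Subgroup.closure (range fun j => P.reflection (β j)) :=
    Subgroup.subset_closure ⟨j, rfl⟩
  obtain ⟨l, hl, hprod, hlen⟩ := exists_list_length_eq_wordLength hinv (mul_mem hw hsj)
  have hneg : IsNonposComb R (fun j => P.root (β j)) (l.prod (P.root (β j))) := by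
    rw [hprod, LinearEquiv.mul_apply, reflection_apply_self, map_neg]
    exact hpos.neg
  obtain ⟨l', hl', hprod', hlen'⟩ :=
    exists_list_prod_eq_mul_reflection_of_isNonposComb hind hbase j hl hneg
  have hw' : l'.prod = w := by rw [hprod', hprod, mul_assoc, ← sq, reflection_sq, mul_one]
  have hle : wordLength (range fun j => P.reflection (β j)) w ≤ l'.length :=
    hw' ▸ wordLength_list_prod_le hl'
  omega

lemma coroot'_nonneg_of_isNonposComb [Fintype ι] {k : ι}
    (hk : IsNonposComb R (fun j => P.root (β j)) (P.root k)) {x : M}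
    (hx : ∀ j, P.coroot' (β j) x ≤ 0) : 0 ≤ P.coroot' k x := by
  obtain ⟨d, hd, hsum⟩ := hk
  have hpair := congrArg (P.toLinearMap x) (P.rootForm_self_smul_coroot_eq_sum hsum)
  simp only [map_smul, map_sum, smul_eq_mul] at hpair
  refine nonneg_of_mul_nonneg_right ?_ (P.rootForm_root_self_pos k)
  rw [show P.coroot' k x = P.toLinearMap x (P.coroot k) from rfl, hpair]
  exact Finset.sum_nonneg fun j _ =>
    mul_nonneg_of_nonpos_of_nonpos (mul_nonpos_of_nonpos_of_nonneg (hd j)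
      (P.rootForm_root_self_pos (β j)).le) (hx j)

lemma isNonnegComb_apply_root_of_coroot'_neg [Fintype ι]
    (hbase : ∀ k, IsNonnegComb R (fun j => P.root (β j)) (P.root k) ∨
      IsNonposComb R (fun j => P.root (β j)) (P.root k))
    {w : M ≃ₗ[R] M} (hw : w ∈ Subgroup.closure (range P.reflection)) {x : M}
    (hwx : ∀ j, P.coroot' (β j) (w x) ≤ 0) {j : Fin n} (hx : P.coroot' (β j) x < 0) :
    IsNonnegComb R (fun j => P.root (β j)) (w (P.root (β j))) := by
  obtain ⟨σ, hσ⟩ := P.exists_perm_of_mem_closure_range_reflection hw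
  obtain ⟨hroot, hcoroot⟩ := hσ (β j)
  rw [hroot]
  refine (hbase _).resolve_right fun hneg => ?_
  have := coroot'_nonneg_of_isNonposComb hneg hwx
  rw [hcoroot] at this
  exact this.not_gt hx

end LinearOrder

end RootPairing

theorem card_min_reps_to_antidominant_eq_card_stabilizer_general
    {ι V V' : Type*} [Fintype ι] [AddCommGroup V] [Module ℝ V]
    [AddCommGroup V'] [Module ℝ V']
    (P : RootSystem ι ℝ V V')
    {n : ℕ} (β : Fin n → ι)
    (hind : LinearIndependent ℝ fun j => P.root (β j))
    (hbase : ∀ k : ι,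
      (∃ c : Fin n → ℝ, (∀ j, 0 ≤ c j) ∧ P.root k = ∑ j, c j • P.root (β j)) ∨
      (∃ c : Fin n → ℝ, (∀ j, c j ≤ 0) ∧ P.root k = ∑ j, c j • P.root (β j)))
    (S : Set (V ≃ₗ[ℝ] V)) (hS : S = Set.range fun j => P.reflection (β j))
    (i : Fin n) (lam : V)
    (hlam_j : ∀ j, j ≠ i → P.toLinearMap lam (P.coroot (β j)) = -1)
    (lam_ad : V)
    (horb : ∃ u ∈ Subgroup.closure S, u lam = lam_ad)
    (had : ∀ j : Fin n, P.toLinearMap lam_ad (P.coroot (β j)) ≤ 0) :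
    Nat.card {w : V ≃ₗ[ℝ] V | w ∈ Subgroup.closure S ∧
        (∀ j, j ≠ i → wordLength S (w * P.reflection (β j)) > wordLength S w) ∧
        w lam = lam_ad} =
      Nat.card {u : V ≃ₗ[ℝ] V | u ∈ Subgroup.closure S ∧ u lam_ad = lam_ad} := by
  have := IsAddTorsionFree.of_isTorsionFree ℝ V'
  subst hS
  obtain ⟨u₀, hu₀, rfl⟩ := horb
  have hmin {w : V ≃ₗ[ℝ] V} (hw : w ∈ Subgroup.closure (range fun j => P.reflection (β j)))
      (hwlam : w lam = u₀ lam) (j : Fin n) (hj : j ≠ i) :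
      wordLength (range fun j => P.reflection (β j)) w <
        wordLength (range fun j => P.reflection (β j)) (w * P.reflection (β j)) :=
    RootPairing.wordLength_lt_wordLength_mul_reflection hind hbase hw <|
      RootPairing.isNonnegComb_apply_root_of_coroot'_neg hbase
        (Subgroup.closure_mono (range_comp_subset_range β P.reflection) hw)
        (x := lam) (hwlam ▸ had) ((hlam_j j hj).trans_lt (by norm_num))
  refine (Nat.card_congr (Equiv.subtypeEquivRight fun w => ?_)).trans
    (Subgroup.card_mem_and_smul_eq_eq_card_mem_and_smul_self hu₀ lam)
  exact ⟨fun ⟨hw, _, hwlam⟩ => ⟨hw, hwlam⟩, fun ⟨hw, hwlam⟩ => ⟨hw, hmin hw hwlam, hwlam⟩⟩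

/-- Let `Φ` be a finite crystallographic root system spanning a real vector space `V`, with
simple roots `α₁, …, αₙ` (indexed by `β : Fin n → ι`), corresponding coroots, Weyl group
generated by the simple reflections `s₁, …, sₙ` (the set `S`), and length function
`wordLength S`.  Fix an index `i` and let `λ ∈ V` satisfy `⟨λ, α̌ᵢ⟩ ≥ 0` and
`⟨λ, α̌ⱼ⟩ = -1` for every `j ≠ i`, and let `λₐ.d.` be an anti-dominant element of the orbit
`W • λ` (i.e. `⟨λₐ.d., α̌ⱼ⟩ ≤ 0` for all `j`).  Then the number of elements `w` of the set
`Wᴶ = {w ∈ W : ℓ(w sⱼ) > ℓ(w) for all j ≠ i}` of minimal-length coset representatives of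
`W / W_J` (where `W_J` is the parabolic subgroup generated by `{sⱼ : j ≠ i}`) satisfying
`w • λ = λₐ.d.` equals the order of the stabilizer `Stab_W(λₐ.d.) = {u ∈ W : u • λₐ.d. = λₐ.d.}`. -/
theorem card_min_reps_to_antidominant_eq_card_stabilizer
    {ι V V' : Type*} [Fintype ι] [AddCommGroup V] [Module ℝ V]
    [AddCommGroup V'] [Module ℝ V']
    (P : RootSystem ι ℝ V V')
    (hcrys : P.IsCrystallographic)
    {n : ℕ} (β : Fin n → ι)
    (hind : LinearIndependent ℝ fun j => P.root (β j))
    (hbase : ∀ k : ι,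
      (∃ c : Fin n → ℝ, (∀ j, 0 ≤ c j) ∧ P.root k = ∑ j, c j • P.root (β j)) ∨
      (∃ c : Fin n → ℝ, (∀ j, c j ≤ 0) ∧ P.root k = ∑ j, c j • P.root (β j)))
    (S : Set (V ≃ₗ[ℝ] V)) (hS : S = Set.range fun j => P.reflection (β j))
    (hgen : Subgroup.closure S = Subgroup.closure (Set.range P.reflection))
    (i : Fin n) (lam : V)
    (hlam_i : 0 ≤ P.toLinearMap lam (P.coroot (β i)))
    (hlam_j : ∀ j, j ≠ i → P.toLinearMap lam (P.coroot (β j)) = -1)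
    (lam_ad : V)
    (horb : ∃ u ∈ Subgroup.closure S, u lam = lam_ad)
    (had : ∀ j : Fin n, P.toLinearMap lam_ad (P.coroot (β j)) ≤ 0) :
    Nat.card {w : V ≃ₗ[ℝ] V | w ∈ Subgroup.closure S ∧
        (∀ j, j ≠ i → wordLength S (w * P.reflection (β j)) > wordLength S w) ∧
        w lam = lam_ad} =
      Nat.card {u : V ≃ₗ[ℝ] V | u ∈ Subgroup.closure S ∧ u lam_ad = lam_ad} :=
  card_min_reps_to_antidominant_eq_card_stabilizer_general P β hind hbase S hS i lam hlam_j lam_ad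
    horb had
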